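/- arXiv:2312.10438 — 2 statements merged into one kernel-verified Lean document; each statement's English description precedes it below -/
import Mathlib

section
/- (Exact form of the optimal denoising autoencoder.) Let λ be a probability measure on ℝⁿ with finite first moment (the law of the clean signal y), let ς > 0, and define the smoothed density p_ς(x) = ∫ g_ς(x − y) dλ(y). The optimal denoising autoencoder, i.e., the conditional mean R*(x; ς) = (∫ y g_ς(x − y) dλ(y)) / p_ς(x) of y given the corrupted observation x = y + ςu with u ~ N(0, Iₙ) independent of y, satisfies, at every x with p_ς(x) > 0, R*(x; ς) = x + ς² ∇_x log p_ς(x). -/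
open MeasureTheory Real

/-- The isotropic Gaussian density `g_ς(x) = (2πς²)^{-n/2} exp(-‖x‖²/(2ς²))` on ℝⁿ. -/
noncomputable def gaussDensity (n : ℕ) (ς : ℝ) (x : EuclideanSpace ℝ (Fin n)) : ℝ :=
  (2 * π * ς ^ 2) ^ (-(n : ℝ) / 2) * Real.exp (-‖x‖ ^ 2 / (2 * ς ^ 2))

variable {n : ℕ} {ς : ℝ}

lemma gauss_pos (hς : 0 < ς) (z : EuclideanSpace ℝ (Fin n)) : 0 < gaussDensity n ς z := by
  unfold gaussDensity
  positivity

lemma gauss_le (hς : 0 < ς) (z : EuclideanSpace ℝ (Fin n)) :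
    gaussDensity n ς z ≤ (2 * π * ς ^ 2) ^ (-(n : ℝ) / 2) := by
  unfold gaussDensity
  have h1 : Real.exp (-‖z‖ ^ 2 / (2 * ς ^ 2)) ≤ 1 := by
    rw [Real.exp_le_one_iff]
    have : (0:ℝ) < 2 * ς ^ 2 := by positivity
    apply div_nonpos_of_nonpos_of_nonneg <;> [simp [sq_nonneg]; positivity]
  have hc : (0:ℝ) < (2 * π * ς ^ 2) ^ (-(n : ℝ) / 2) := by positivity
  nlinarith

lemma gauss_mul_norm_le (hς : 0 < ς) (z : EuclideanSpace ℝ (Fin n)) :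
    gaussDensity n ς z * ‖z‖ ≤ (2 * π * ς ^ 2) ^ (-(n : ℝ) / 2) * ς := by
  unfold gaussDensity
  have hc : (0:ℝ) < (2 * π * ς ^ 2) ^ (-(n : ℝ) / 2) := by positivity
  rw [mul_assoc]
  apply mul_le_mul_of_nonneg_left _ hc.le
  set t := ‖z‖ with ht
  have htn : 0 ≤ t := norm_nonneg _
  have hkey := Real.add_one_le_exp (t ^ 2 / (2 * ς ^ 2))
  rw [neg_div, Real.exp_neg, inv_mul_le_iff₀ (Real.exp_pos _)]
  have h5 : (t ^ 2 / (2 * ς ^ 2) + 1) * ς ≤ rexp (t ^ 2 / (2 * ς ^ 2)) * ς :=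
    mul_le_mul_of_nonneg_right hkey hς.le
  have h6 : (t ^ 2 / (2 * ς ^ 2) + 1) * ς = t ^ 2 / (2 * ς) + ς := by
    field_simp
  have h8 : t ^ 2 / (2 * ς) * (2 * ς) = t ^ 2 := by field_simp
  nlinarith [sq_nonneg (t - ς), hς]

lemma gauss_cont (x' : EuclideanSpace ℝ (Fin n)) :
    Continuous (fun y : EuclideanSpace ℝ (Fin n) => gaussDensity n ς (x' - y)) := by
  unfold gaussDensity
  fun_prop

lemma gauss_hasFDerivAt (hς : 0 < ς) (y x' : EuclideanSpace ℝ (Fin n)) :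
    HasFDerivAt (fun x'' => gaussDensity n ς (x'' - y))
      (innerSL ℝ (((ς ^ 2)⁻¹ * gaussDensity n ς (x' - y)) • (y - x'))) x' := by
  have h1 : HasFDerivAt (fun x'' : EuclideanSpace ℝ (Fin n) => x'' - y)
      (ContinuousLinearMap.id ℝ _) x' := (hasFDerivAt_id x').sub_const y
  have h2 := h1.norm_sq
  have h3 := ((h2.const_mul (-(2 * ς ^ 2)⁻¹)).exp).const_mul
    ((2 * π * ς ^ 2) ^ (-(n : ℝ) / 2))
  have heq : (fun x'' : EuclideanSpace ℝ (Fin n) =>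
      (2 * π * ς ^ 2) ^ (-(n : ℝ) / 2) * Real.exp (-(2 * ς ^ 2)⁻¹ * ‖x'' - y‖ ^ 2))
      = fun x'' => gaussDensity n ς (x'' - y) := by
    funext x''
    unfold gaussDensity
    ring_nf
  rw [heq] at h3
  refine h3.congr_fderiv ?_
  ext v
  have hne : (ς : ℝ) ^ 2 ≠ 0 := by positivity
  simp only [innerSL_apply_apply, ContinuousLinearMap.smul_apply, ContinuousLinearMap.coe_smul',
    Pi.smul_apply, ContinuousLinearMap.coe_comp', Function.comp_apply,
    ContinuousLinearMap.coe_id', id_eq, real_inner_smul_left, smul_eq_mul]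
  have hneg : y - x' = -(x' - y) := by abel
  rw [hneg, inner_neg_left]
  unfold gaussDensity
  field_simp
  ring

/-- Exact form of the optimal denoising autoencoder: for a clean-signal law `λ` with
finite first moment and noise level `ς > 0`, at every `x` with `p_ς(x) > 0` the optimal
DAE (the conditional mean of `y` given `y + ςu = x`) satisfies
`R*(x; ς) = x + ς² ∇_x log p_ς(x)`, where `p_ς(x) = ∫ g_ς(x - y) dλ(y)`. -/
theorem optimal_dae_exact_form (n : ℕ) (ς : ℝ) (hς : 0 < ς)
    (lam : Measure (EuclideanSpace ℝ (Fin n))) [IsProbabilityMeasure lam]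
    (hmom : Integrable (fun y => ‖y‖) lam) (x : EuclideanSpace ℝ (Fin n))
    (hpx : 0 < ∫ y, gaussDensity n ς (x - y) ∂lam) :
    (∫ y, gaussDensity n ς (x - y) ∂lam)⁻¹ • (∫ y, gaussDensity n ς (x - y) • y ∂lam) =
      x + ς ^ 2 •
        ((∫ y, gaussDensity n ς (x - y) ∂lam)⁻¹ •
          gradient (fun x' => ∫ y, gaussDensity n ς (x' - y) ∂lam) x) := by
  set c : ℝ := (2 * π * ς ^ 2) ^ (-(n : ℝ) / 2) with hc
  have hcpos : 0 < c := by rw [hc]; positivity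
  -- integrability of the density
  have hPint : ∀ x' : EuclideanSpace ℝ (Fin n),
      Integrable (fun y => gaussDensity n ς (x' - y)) lam := by
    intro x'
    refine Integrable.mono' (integrable_const c) (gauss_cont x').aestronglyMeasurable ?_
    filter_upwards with y
    rw [Real.norm_of_nonneg (gauss_pos hς _).le]
    exact gauss_le hς _
  -- integrability of g • y
  have hMint : Integrable (fun y : EuclideanSpace ℝ (Fin n) =>
      gaussDensity n ς (x - y) • y) lam := by
    refine Integrable.mono' (hmom.const_mul c) ?_ ?_
    · exact ((gauss_cont x).smul continuous_id).aestronglyMeasurable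
    · filter_upwards with y
      rw [norm_smul, Real.norm_of_nonneg (gauss_pos hς _).le]
      exact mul_le_mul_of_nonneg_right (gauss_le hς _) (norm_nonneg _)
  -- the vector field to integrate
  set φ : EuclideanSpace ℝ (Fin n) → EuclideanSpace ℝ (Fin n) :=
    fun y => ((ς ^ 2)⁻¹ * gaussDensity n ς (x - y)) • (y - x) with hφ
  have hφeq : φ = fun y => (ς ^ 2)⁻¹ •
      (gaussDensity n ς (x - y) • y - gaussDensity n ς (x - y) • x) := by
    funext y
    show ((ς ^ 2)⁻¹ * gaussDensity n ς (x - y)) • (y - x) = _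
    rw [mul_smul, smul_sub]
  have hφint : Integrable φ lam := by
    rw [hφeq]
    exact (hMint.sub ((hPint x).smul_const x)).smul ((ς ^ 2)⁻¹ : ℝ)
  -- differentiation under the integral sign
  have hderiv : HasFDerivAt (fun x' => ∫ y, gaussDensity n ς (x' - y) ∂lam)
      (∫ y, innerSL ℝ (((ς ^ 2)⁻¹ * gaussDensity n ς (x - y)) • (y - x)) ∂lam) x := by
    refine hasFDerivAt_integral_of_dominated_of_fderiv_le (𝕜 := ℝ) (μ := lam)
      (F := fun x' y => gaussDensity n ς (x' - y))
      (F' := fun x' y => innerSL ℝ (((ς ^ 2)⁻¹ * gaussDensity n ς (x' - y)) • (y - x')))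
      (x₀ := x) (bound := fun _ => (ς ^ 2)⁻¹ * (c * ς)) (s := Metric.ball x 1) (Metric.ball_mem_nhds x one_pos) ?_ ?_ ?_ ?_ ?_ ?_
    · filter_upwards with x'
      exact (gauss_cont x').aestronglyMeasurable
    · exact hPint x
    · exact ((innerSL ℝ).continuous.comp ((continuous_const.mul
        (gauss_cont x)).smul (continuous_id.sub continuous_const))).aestronglyMeasurable
    · filter_upwards with y
      intro x' _
      rw [innerSL_apply_norm, norm_smul, Real.norm_of_nonneg
        (mul_nonneg (by positivity) (gauss_pos hς _).le)]
      have h1 : ‖y - x'‖ = ‖x' - y‖ := by rw [← norm_neg]; congr 1; abel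
      rw [h1, mul_assoc]
      exact mul_le_mul_of_nonneg_left (gauss_mul_norm_le hς _) (by positivity)
    · exact integrable_const _
    · filter_upwards with y
      intro x' _
      exact gauss_hasFDerivAt hς y x'
  -- identify the integral of functionals with the functional of the integral
  have hint_eq : (∫ y, innerSL ℝ (((ς ^ 2)⁻¹ * gaussDensity n ς (x - y)) • (y - x)) ∂lam)
      = innerSL ℝ (∫ y, φ y ∂lam) := (innerSL ℝ).integral_comp_comm hφint
  rw [hint_eq] at hderiv
  have hgrad : HasGradientAt (fun x' => ∫ y, gaussDensity n ς (x' - y) ∂lam)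
      (∫ y, φ y ∂lam) x := by
    unfold HasGradientAt HasGradientAtFilter
    have htd : (InnerProductSpace.toDual ℝ (EuclideanSpace ℝ (Fin n)) (∫ y, φ y ∂lam)
        : EuclideanSpace ℝ (Fin n) →L[ℝ] ℝ) = innerSL ℝ (∫ y, φ y ∂lam) := by
      ext v
      simp [InnerProductSpace.toDual_apply_apply]
    rw [htd]
    exact hderiv
  rw [hgrad.gradient]
  -- final algebra
  set P : ℝ := ∫ y, gaussDensity n ς (x - y) ∂lam with hP
  set M : EuclideanSpace ℝ (Fin n) := ∫ y, gaussDensity n ς (x - y) • y ∂lam with hM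
  have hφval : (∫ y, φ y ∂lam) = (ς ^ 2)⁻¹ • (M - P • x) := by
    rw [hφeq, integral_smul]
    congr 1
    rw [integral_sub hMint ((hPint x).smul_const x), integral_smul_const]
  rw [hφval]
  have hς2 : (ς : ℝ) ^ 2 ≠ 0 := by positivity
  have hstep : ς ^ 2 • (P⁻¹ • ((ς ^ 2)⁻¹ • (M - P • x))) = P⁻¹ • (M - P • x) := by
    rw [smul_smul, smul_smul, mul_comm (ς ^ 2) P⁻¹, mul_assoc, mul_inv_cancel₀ hς2, mul_one]
  rw [hstep, smul_sub, smul_smul, inv_mul_cancel₀ hpx.ne', one_smul]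
  abel
end

section
/- (Alain–Bengio asymptotics of the optimal DAE.) Let λ be a probability measure on ℝⁿ with finite first moment whose density p with respect to Lebesgue measure is bounded and continuous with bounded continuous gradient ∇p, and let x ∈ ℝⁿ with p(x) > 0. For ς > 0 let p_ς(x) = ∫ g_ς(x − y) dλ(y) and let R*(x; ς) = (∫ y g_ς(x − y) dλ(y)) / p_ς(x) be the optimal denoising autoencoder. Then R*(x; ς) = x + ς² ∇_x log p(x) + o(ς²) as ς → 0; that is, (R*(x; ς) − x)/ς² converges to the Stein's score function ∇_x log p(x) as ς → 0. -/
open MeasureTheory Real Filter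

namespace DAE
variable (n : ℕ)
local notation "E" => EuclideanSpace ℝ (Fin n)

lemma gauss_one_def (u : E) :
    gaussDensity n 1 u = (2 * π) ^ (-(n : ℝ) / 2) * rexp (-‖u‖ ^ 2 / 2) := by
  simp [gaussDensity]

lemma gauss_pos {ς : ℝ} (hς : ς ≠ 0) (u : E) : 0 < gaussDensity n ς u := by
  have h2 : (0:ℝ) < 2 * π * ς ^ 2 := by positivity
  unfold gaussDensity
  positivity

lemma gauss_nonneg {ς : ℝ} (u : E) : 0 ≤ gaussDensity n ς u := by
  unfold gaussDensity
  positivity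

lemma gauss_neg {ς : ℝ} (u : E) : gaussDensity n ς (-u) = gaussDensity n ς u := by
  simp [gaussDensity]

lemma gauss_cont {ς : ℝ} : Continuous (gaussDensity n ς) := by
  unfold gaussDensity
  exact continuous_const.mul (Real.continuous_exp.comp
    (((continuous_norm.pow 2).neg).div_const _))

lemma gauss_le {ς : ℝ} (u : E) :
    gaussDensity n ς u ≤ (2 * π * ς ^ 2) ^ (-(n : ℝ) / 2) := by
  have : rexp (-‖u‖ ^ 2 / (2 * ς ^ 2)) ≤ 1 := by
    rw [Real.exp_le_one_iff]
    rcases eq_or_ne ς 0 with rfl | hς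
    · simp
    · apply div_nonpos_of_nonpos_of_nonneg (neg_nonpos.2 (by positivity))
      positivity
  calc gaussDensity n ς u ≤ (2 * π * ς ^ 2) ^ (-(n : ℝ) / 2) * 1 := by
        apply mul_le_mul_of_nonneg_left this (by positivity)
    _ = _ := mul_one _

lemma integrable_exp_quarter :
    Integrable (fun u : E => rexp (-(1/4) * ‖u‖ ^ 2)) := by
  have h := (GaussianFourier.integrable_cexp_neg_mul_sq_norm_add
    (b := ((1/4 : ℝ) : ℂ)) (by norm_num) 0 (0 : E)).norm
  apply h.congr
  filter_upwards with v
  rw [Complex.norm_exp]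
  have hv : (-((1/4:ℝ):ℂ) * (‖v‖:ℂ) ^ 2 + 0 * ((inner ℝ (0 : E) v : ℝ) : ℂ))
      = ((-(1/4) * ‖v‖ ^ 2 : ℝ) : ℂ) := by push_cast; ring
  rw [hv, Complex.ofReal_re]

lemma integrable_pow_mul_gauss (k : ℕ) :
    Integrable (fun u : E => ‖u‖ ^ k * gaussDensity n 1 u) := by
  have key : ∀ t : ℝ, 0 ≤ t → t ^ k * rexp (-t ^ 2 / 2) ≤
      (k.factorial : ℝ) * rexp 1 * rexp (-(1/4) * t ^ 2) := by
    intro t ht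
    have h1 : t ^ k ≤ (k.factorial : ℝ) * rexp t := by
      have := Real.sum_le_exp_of_nonneg ht (k + 1)
      have h2 : t ^ k / (k.factorial : ℝ) ≤ rexp t := by
        refine le_trans ?_ this
        refine Finset.single_le_sum (f := fun i => t ^ i / (i.factorial : ℝ)) ?_ ?_
        · intro i _; positivity
        · exact Finset.self_mem_range_succ k
      have hk : (0:ℝ) < (k.factorial : ℝ) := by positivity
      calc t ^ k = t ^ k / (k.factorial : ℝ) * (k.factorial : ℝ) := by field_simp
        _ ≤ rexp t * (k.factorial : ℝ) := by
            apply mul_le_mul_of_nonneg_right h2 hk.le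
        _ = _ := by ring
    calc t ^ k * rexp (-t ^ 2 / 2) ≤ (k.factorial : ℝ) * rexp t * rexp (-t ^ 2 / 2) := by
          apply mul_le_mul_of_nonneg_right h1 (Real.exp_nonneg _)
      _ = (k.factorial : ℝ) * rexp (t - t ^ 2 / 4) * rexp (-(1/4) * t ^ 2) := by
          rw [mul_assoc, mul_assoc, ← Real.exp_add, ← Real.exp_add]; ring_nf
      _ ≤ (k.factorial : ℝ) * rexp 1 * rexp (-(1/4) * t ^ 2) := by
          apply mul_le_mul_of_nonneg_right _ (Real.exp_nonneg _)
          apply mul_le_mul_of_nonneg_left _ (by positivity)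
          apply Real.exp_le_exp.2
          nlinarith [sq_nonneg (t - 2)]
  have hbd : ∀ u : E, ‖(fun u : E => ‖u‖ ^ k * gaussDensity n 1 u) u‖ ≤
      ((2 * π) ^ (-(n : ℝ) / 2) * ((k.factorial : ℝ) * rexp 1)) * rexp (-(1/4) * ‖u‖ ^ 2) := by
    intro u
    rw [Real.norm_eq_abs, abs_of_nonneg (mul_nonneg (by positivity) (gauss_nonneg n u))]
    rw [gauss_one_def]
    have := key ‖u‖ (norm_nonneg u)
    calc ‖u‖ ^ k * ((2 * π) ^ (-(n : ℝ) / 2) * rexp (-‖u‖ ^ 2 / 2))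
          = (2 * π) ^ (-(n : ℝ) / 2) * (‖u‖ ^ k * rexp (-‖u‖ ^ 2 / 2)) := by ring
      _ ≤ (2 * π) ^ (-(n : ℝ) / 2) * ((k.factorial : ℝ) * rexp 1 * rexp (-(1/4) * ‖u‖ ^ 2)) := by
          apply mul_le_mul_of_nonneg_left this (by positivity)
      _ = _ := by ring
  refine Integrable.mono' ((integrable_exp_quarter n).const_mul _) ?_
    (Eventually.of_forall hbd)
  exact ((continuous_norm.pow k).mul (gauss_cont n)).aestronglyMeasurable

lemma integral_gauss_one : ∫ u : E, gaussDensity n 1 u = 1 := by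
  have h : ∫ u : E, rexp (-(1/2 : ℝ) * ‖u‖ ^ 2) = (π / (1/2)) ^ ((n : ℝ) / 2) := by
    rw [GaussianFourier.integral_rexp_neg_mul_sq_norm (by norm_num : (0:ℝ) < 1/2)]
    norm_num [finrank_euclideanSpace_fin]
  simp only [gauss_one_def, integral_const_mul]
  have h2 : ∀ u : E, rexp (-‖u‖ ^ 2 / 2) = rexp (-(1/2 : ℝ) * ‖u‖ ^ 2) := by
    intro u; ring_nf
  simp only [h2]
  rw [h]
  have hπ : (0:ℝ) < 2 * π := by positivity
  rw [show π / (1/2 : ℝ) = 2 * π by ring, ← Real.rpow_add hπ,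
    show (-(n:ℝ)/2 + (n:ℝ)/2) = 0 by ring, Real.rpow_zero]


/-- 1D Gaussian moment integrand. -/
noncomputable def phi (m : ℕ) (t : ℝ) : ℝ :=
  t ^ m * ((2 * π) ^ (-(1:ℝ) / 2) * rexp (-t ^ 2 / 2))

lemma integrable_pow_mul_exp_1d (m : ℕ) :
    Integrable (fun t : ℝ => t ^ m * rexp (-t ^ 2 / 2)) := by
  have h := integrable_rpow_mul_exp_neg_mul_sq (b := 1/2) (by norm_num) (s := (m : ℝ))
    (lt_of_lt_of_le (by norm_num) (Nat.cast_nonneg m))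
  apply h.congr
  filter_upwards with t
  rw [Real.rpow_natCast]
  ring_nf

lemma phi_integrable (m : ℕ) : Integrable (phi m) := by
  unfold phi
  have := ((integrable_pow_mul_exp_1d m).const_mul ((2 * π) ^ (-(1:ℝ) / 2)))
  apply this.congr
  filter_upwards with t
  ring

lemma integral_exp_1d : ∫ t : ℝ, rexp (-t ^ 2 / 2) = Real.sqrt (2 * π) := by
  have h := integral_gaussian (1/2)
  rw [show π / (1/2 : ℝ) = 2 * π by ring] at h
  rw [← h]
  congr 1 with t
  ring_nf

lemma sqrt_two_pi_rpow : Real.sqrt (2 * π) = (2 * π) ^ ((1:ℝ)/2) := by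
  rw [Real.sqrt_eq_rpow]

lemma integral_phi0 : ∫ t : ℝ, phi 0 t = 1 := by
  unfold phi
  simp only [pow_zero, one_mul]
  rw [integral_const_mul, integral_exp_1d, sqrt_two_pi_rpow,
    ← Real.rpow_add (by positivity)]
  norm_num

lemma integral_phi1 : ∫ t : ℝ, phi 1 t = 0 := by
  have h : ∫ t : ℝ, phi 1 (-t) = ∫ t : ℝ, phi 1 t := integral_neg_eq_self _ _
  have h2 : ∀ t : ℝ, phi 1 (-t) = - phi 1 t := by
    intro t; unfold phi; ring_nf
  simp only [h2, integral_neg] at h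
  linarith

lemma integral_phi2 : ∫ t : ℝ, phi 2 t = 1 := by
  have hD : ∀ t : ℝ, HasDerivAt (fun t : ℝ => -(t * rexp (-t ^ 2 / 2)))
      (t ^ 2 * rexp (-t ^ 2 / 2) - rexp (-t ^ 2 / 2)) t := by
    intro t
    have h1 : HasDerivAt (fun t : ℝ => -t ^ 2 / 2) (-t) t := by
      have := ((hasDerivAt_pow 2 t).neg).div_const 2
      simpa using this.congr_deriv (by push_cast; ring)
    have h3 : HasDerivAt (fun t : ℝ => t * rexp (-t ^ 2 / 2))
        (1 * rexp (-t ^ 2 / 2) + t * (rexp (-t ^ 2 / 2) * (-t))) t :=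
      (hasDerivAt_id t).mul h1.exp
    apply h3.neg.congr_deriv
    ring
  have hInt : Integrable (fun t : ℝ => t ^ 2 * rexp (-t ^ 2 / 2) - rexp (-t ^ 2 / 2)) := by
    have := (integrable_pow_mul_exp_1d 2).sub (integrable_pow_mul_exp_1d 0)
    apply this.congr
    filter_upwards with t
    simp only [Pi.sub_apply, pow_zero, one_mul]
  have h2 : Tendsto (fun t : ℝ => t * rexp (-t ^ 2 / 2)) atTop (nhds 0) := by
    have hlit : (fun t : ℝ => t ^ (1:ℝ) * rexp (-(1/2) * t ^ 2)) =o[atTop]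
        (fun t : ℝ => rexp (-(1/2) * t)) :=
      rpow_mul_exp_neg_mul_sq_isLittleO_exp_neg (by norm_num) 1
    have hm : Tendsto (fun t : ℝ => -(1/2 : ℝ) * t) atTop atBot :=
      tendsto_id.const_mul_atTop_of_neg (by norm_num)
    have h0 : Tendsto (fun t : ℝ => rexp (-(1/2 : ℝ) * t)) atTop (nhds 0) :=
      Real.tendsto_exp_atBot.comp hm
    have h1 : Tendsto (fun t : ℝ => t ^ (1:ℝ) * rexp (-(1/2) * t ^ 2)) atTop (nhds 0) :=
      hlit.isBigO.trans_tendsto h0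
    apply h1.congr'
    filter_upwards [eventually_ge_atTop (0:ℝ)] with t ht
    rw [Real.rpow_one]
    ring_nf
  have hTop : Tendsto (fun t : ℝ => -(t * rexp (-t ^ 2 / 2))) atTop (nhds 0) := by
    simpa using h2.neg
  have hBot : Tendsto (fun t : ℝ => -(t * rexp (-t ^ 2 / 2))) atBot (nhds 0) := by
    have h3 := h2.comp tendsto_neg_atBot_atTop
    apply h3.congr
    intro t
    show (-t) * rexp (-(-t) ^ 2 / 2) = -(t * rexp (-t ^ 2 / 2))
    ring_nf
  have key := integral_of_hasDerivAt_of_tendsto hD hInt hBot hTop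
  rw [sub_zero] at key
  have hsub : ∫ t : ℝ, (t ^ 2 * rexp (-t ^ 2 / 2) - rexp (-t ^ 2 / 2)) =
      (∫ t : ℝ, t ^ 2 * rexp (-t ^ 2 / 2)) - ∫ t : ℝ, rexp (-t ^ 2 / 2) :=
    integral_sub (integrable_pow_mul_exp_1d 2) (by simpa using integrable_pow_mul_exp_1d 0)
  rw [hsub] at key
  have h4 : ∫ t : ℝ, t ^ 2 * rexp (-t ^ 2 / 2) = Real.sqrt (2 * π) := by
    rw [← integral_exp_1d]; linarith
  unfold phi
  have hcomm : ∀ t : ℝ, t ^ 2 * ((2 * π) ^ (-(1:ℝ) / 2) * rexp (-t ^ 2 / 2)) =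
      (2 * π) ^ (-(1:ℝ) / 2) * (t ^ 2 * rexp (-t ^ 2 / 2)) := fun t => by ring
  simp only [hcomm]
  rw [integral_const_mul, h4, sqrt_two_pi_rpow, ← Real.rpow_add (by positivity)]
  norm_num

lemma integral_phi (m : ℕ) (hm : m ≤ 2) :
    ∫ t : ℝ, phi m t = if m = 1 then 0 else 1 := by
  interval_cases m
  · simpa using integral_phi0
  · simpa using integral_phi1
  · simpa using integral_phi2


lemma coord_symm (v : Fin n → ℝ) (k : Fin n) :
    ((MeasurableEquiv.toLp 2 (Fin n → ℝ)) v) k = v k := by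
  rfl

lemma gauss_one_eq_prod (v : Fin n → ℝ) :
    gaussDensity n 1 ((MeasurableEquiv.toLp 2 (Fin n → ℝ)) v)
      = ∏ k, ((2 * π) ^ (-(1:ℝ)/2) * rexp (-(v k) ^ 2 / 2)) := by
  rw [gauss_one_def]
  have hnorm : ‖(MeasurableEquiv.toLp 2 (Fin n → ℝ)) v‖ ^ 2 = ∑ k, (v k) ^ 2 := by
    rw [EuclideanSpace.norm_eq, Real.sq_sqrt (by positivity)]
    simp only [coord_symm, Real.norm_eq_abs, sq_abs]
  rw [hnorm, Finset.prod_mul_distrib, Finset.prod_const]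
  congr 1
  · rw [Finset.card_univ, Fintype.card_fin, ← Real.rpow_natCast ((2*π) ^ (-(1:ℝ)/2)) n,
      ← Real.rpow_mul (by positivity)]
    congr 1
    ring
  · rw [← Real.exp_sum]
    congr 1
    rw [← Finset.sum_div, ← Finset.sum_neg_distrib]

lemma integral_coord_prod (i j : Fin n) :
    ∫ u : E, (u i * u j) * gaussDensity n 1 u = if i = j then 1 else 0 := by
  classical
  set m : Fin n → ℕ := fun k => (if k = i then 1 else 0) + (if k = j then 1 else 0) with hm
  have transfer : ∫ u : E, (u i * u j) * gaussDensity n 1 u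
      = ∫ v : Fin n → ℝ, ∏ k, phi (m k) (v k) := by
    rw [← MeasurePreserving.integral_comp
      (EuclideanSpace.volume_preserving_symm_measurableEquiv_toLp (Fin n)).symm
      (MeasurableEquiv.measurableEmbedding _)
      (fun u : E => (u i * u j) * gaussDensity n 1 u)]
    apply integral_congr_ae
    filter_upwards with v
    show (((MeasurableEquiv.toLp 2 (Fin n → ℝ)) v) i *
        ((MeasurableEquiv.toLp 2 (Fin n → ℝ)) v) j) *
        gaussDensity n 1 ((MeasurableEquiv.toLp 2 (Fin n → ℝ)) v) = _
    rw [gauss_one_eq_prod, coord_symm, coord_symm]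
    unfold phi
    have hvm : ∏ k, v k ^ m k = v i * v j := by
      simp only [hm, pow_add]
      rw [Finset.prod_mul_distrib]
      congr 1
      · simp [pow_ite, Finset.prod_ite_eq']
      · simp [pow_ite, Finset.prod_ite_eq']
    rw [← hvm, ← Finset.prod_mul_distrib]
  rw [transfer, MeasureTheory.volume_pi, MeasureTheory.integral_fintype_prod_eq_prod
    (fun k t => phi (m k) t)]
  have hmle : ∀ k, m k ≤ 2 := by
    intro k; simp only [hm]; split_ifs <;> norm_num
  have hint : ∀ k : Fin n, ∫ t : ℝ, phi (m k) t = if m k = 1 then 0 else 1 :=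
    fun k => integral_phi _ (hmle k)
  simp only [hint]
  by_cases hij : i = j
  · subst hij
    rw [if_pos rfl]
    apply Finset.prod_eq_one
    intro k _
    rw [if_neg]
    simp only [hm]
    split_ifs <;> omega
  · rw [if_neg hij]
    apply Finset.prod_eq_zero (Finset.mem_univ i)
    rw [if_pos]
    simp [hm, hij]

lemma abs_coord_le_norm (u : E) (i : Fin n) : |u i| ≤ ‖u‖ := by
  rw [EuclideanSpace.norm_eq]
  rw [show |u i| = Real.sqrt (|u i| ^ 2) from (Real.sqrt_sq (abs_nonneg _)).symm]
  apply Real.sqrt_le_sqrt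
  calc |u i| ^ 2 = ‖u i‖ ^ 2 := by rw [Real.norm_eq_abs]
    _ ≤ ∑ k, ‖u k‖ ^ 2 := Finset.single_le_sum (f := fun k => ‖u k‖ ^ 2)
        (fun k _ => by positivity) (Finset.mem_univ i)

lemma integrable_inner_gauss_smul (a : E) :
    Integrable (fun u : E => (inner ℝ a u : ℝ) • (gaussDensity n 1 u • u)) := by
  apply Integrable.mono' ((integrable_pow_mul_gauss n 2).const_mul ‖a‖)
  · apply Continuous.aestronglyMeasurable
    exact ((continuous_const.inner (𝕜 := ℝ) continuous_id).smul
      ((gauss_cont n).smul continuous_id))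
  · filter_upwards with u
    rw [norm_smul, norm_smul]
    have h1 : ‖(inner ℝ a u : ℝ)‖ ≤ ‖a‖ * ‖u‖ := norm_inner_le_norm a u
    have h2 : ‖gaussDensity n 1 u‖ = gaussDensity n 1 u := by
      rw [Real.norm_eq_abs, abs_of_nonneg]
      unfold gaussDensity; positivity
    rw [h2]
    calc ‖(inner ℝ a u : ℝ)‖ * (gaussDensity n 1 u * ‖u‖)
        ≤ (‖a‖ * ‖u‖) * (gaussDensity n 1 u * ‖u‖) := by
          apply mul_le_mul_of_nonneg_right h1
            (mul_nonneg (gauss_nonneg n u) (norm_nonneg u))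
      _ = ‖a‖ * (‖u‖ ^ 2 * gaussDensity n 1 u) := by ring

lemma integral_inner_gauss_smul (a : E) :
    ∫ u : E, (inner ℝ a u : ℝ) • (gaussDensity n 1 u • u) = a := by
  have hF := integrable_inner_gauss_smul n a
  have hcoord : ∀ j : Fin n,
      (∫ u : E, (inner ℝ a u : ℝ) • (gaussDensity n 1 u • u)) j = a j := by
    intro j
    have hproj := (EuclideanSpace.proj j (𝕜 := ℝ)).integral_comp_comm hF
    rw [show (∫ u : E, (inner ℝ a u : ℝ) • (gaussDensity n 1 u • u)) j
      = (EuclideanSpace.proj j (𝕜 := ℝ)) (∫ u : E, (inner ℝ a u : ℝ) • (gaussDensity n 1 u • u))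
      from rfl, ← hproj]
    have : ∀ u : E, (EuclideanSpace.proj j (𝕜 := ℝ))
        ((inner ℝ a u : ℝ) • (gaussDensity n 1 u • u))
        = ∑ i, a i * ((u i * u j) * gaussDensity n 1 u) := by
      intro u
      rw [_root_.map_smul, _root_.map_smul]
      simp only [EuclideanSpace.proj, PiLp.proj_apply, smul_eq_mul]
      rw [PiLp.inner_apply]
      simp only [RCLike.inner_apply, conj_trivial]
      rw [Finset.sum_mul]
      congr 1 with i
      ring
    simp only [this]
    have hterm : ∀ i : Fin n, Integrable (fun u : E =>
        a i * ((u i * u j) * gaussDensity n 1 u)) := by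
      intro i
      apply Integrable.mono' (((integrable_pow_mul_gauss n 2)).const_mul |a i|)
      · apply Continuous.aestronglyMeasurable
        apply continuous_const.mul
        apply Continuous.mul _ (gauss_cont n)
        exact ((continuous_apply i).comp (PiLp.continuous_ofLp 2 _)).mul
          ((continuous_apply j).comp (PiLp.continuous_ofLp 2 _))
      · filter_upwards with u
        rw [Real.norm_eq_abs, abs_mul, abs_mul]
        have hg : |gaussDensity n 1 u| = gaussDensity n 1 u := by
          rw [abs_of_nonneg]; unfold gaussDensity; positivity
        rw [hg, abs_mul]
        calc |a i| * (|u i| * |u j| * gaussDensity n 1 u)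
            ≤ |a i| * (‖u‖ * ‖u‖ * gaussDensity n 1 u) := by
              apply mul_le_mul_of_nonneg_left _ (abs_nonneg _)
              apply mul_le_mul_of_nonneg_right _ (by unfold gaussDensity; positivity)
              exact mul_le_mul (abs_coord_le_norm n u i) (abs_coord_le_norm n u j)
                (abs_nonneg _) (norm_nonneg _)
          _ = |a i| * (‖u‖ ^ 2 * gaussDensity n 1 u) := by ring
    rw [integral_finset_sum _ (fun i _ => hterm i)]
    have : ∀ i : Fin n, ∫ u : E, a i * ((u i * u j) * gaussDensity n 1 u)
        = a i * (if i = j then 1 else 0) := by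
      intro i
      rw [integral_const_mul, integral_coord_prod]
    simp only [this]
    simp [Finset.sum_ite_eq', Finset.mem_univ]
  ext j
  exact hcoord j


lemma gauss_scale {ς : ℝ} (hς : 0 < ς) (u : E) :
    gaussDensity n ς (ς • u) = (ς ^ n)⁻¹ * gaussDensity n 1 u := by
  unfold gaussDensity
  have hnorm : ‖ς • u‖ ^ 2 = ς ^ 2 * ‖u‖ ^ 2 := by
    rw [norm_smul, Real.norm_eq_abs, mul_pow, sq_abs]
  rw [hnorm]
  have hexp : -(ς ^ 2 * ‖u‖ ^ 2) / (2 * ς ^ 2) = -‖u‖ ^ 2 / (2 * 1 ^ 2) := by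
    field_simp
  rw [hexp]
  have hpre : (2 * π * ς ^ 2) ^ (-(n:ℝ) / 2) = (ς ^ n)⁻¹ * (2 * π * 1 ^ 2) ^ (-(n:ℝ) / 2) := by
    rw [one_pow, mul_one, Real.mul_rpow (by positivity) (by positivity)]
    have h2 : ((ς : ℝ) ^ 2) ^ (-(n:ℝ) / 2) = (ς ^ n)⁻¹ := by
      rw [← Real.rpow_natCast ς 2, ← Real.rpow_mul hς.le,
        show (2 : ℕ) * (-(n:ℝ) / 2) = -(n:ℝ) by push_cast; ring,
        Real.rpow_neg hς.le, Real.rpow_natCast]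
    rw [h2]
    ring
  rw [hpre]
  ring

lemma gauss_subst {F : Type*} [NormedAddCommGroup F] [NormedSpace ℝ F]
    {ς : ℝ} (hς : 0 < ς) (x : E) (h : E → F) :
    ∫ y : E, gaussDensity n ς (x - y) • h y
      = ∫ u : E, gaussDensity n 1 u • h (x + ς • u) := by
  set f : E → F := fun y => gaussDensity n ς (x - y) • h y with hf
  have hςn : (0:ℝ) < ς ^ n := by positivity
  have h1 : ∫ u : E, f (x + ς • u) = (ς ^ n)⁻¹ • ∫ y : E, f y := by
    rw [show (fun u : E => f (x + ς • u)) = fun u : E => (fun v => f (x + v)) (ς • u) from rfl]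
    rw [Measure.integral_comp_smul volume (fun v => f (x + v)) ς]
    rw [integral_add_left_eq_self f x]
    congr 1
    rw [finrank_euclideanSpace_fin, abs_of_pos (by positivity)]
  have h2 : ∀ u : E, gaussDensity n 1 u • h (x + ς • u) = (ς ^ n) • f (x + ς • u) := by
    intro u
    rw [hf]
    simp only
    rw [show x - (x + ς • u) = -(ς • u) by abel, gauss_neg, gauss_scale n hς]
    rw [smul_smul]
    congr 1
    rw [mul_inv_cancel_left₀ hςn.ne']
  calc ∫ y : E, gaussDensity n ς (x - y) • h y = ∫ y : E, f y := rfl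
    _ = (ς ^ n) • ((ς ^ n)⁻¹ • ∫ y : E, f y) := by
        rw [smul_inv_smul₀ hςn.ne']
    _ = (ς ^ n) • ∫ u : E, f (x + ς • u) := by rw [h1]
    _ = ∫ u : E, (ς ^ n) • f (x + ς • u) := by rw [integral_smul]
    _ = ∫ u : E, gaussDensity n 1 u • h (x + ς • u) := by
        apply integral_congr_ae
        filter_upwards with u
        rw [h2]


lemma integral_withDensity_smul (p : E → ℝ) (hp_meas : Measurable p)
    (hp_nonneg : ∀ z, 0 ≤ p z) {F : Type} [NormedAddCommGroup F] [NormedSpace ℝ F]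
    (g : E → F) :
    ∫ y, g y ∂((volume : Measure E).withDensity fun y => ENNReal.ofReal (p y))
      = ∫ y, p y • g y := by
  have h0 : (fun y : E => ENNReal.ofReal (p y)) = fun y => ((p y).toNNReal : ENNReal) := rfl
  rw [h0, integral_withDensity_eq_integral_smul hp_meas.real_toNNReal]
  apply integral_congr_ae
  filter_upwards with y
  rw [NNReal.smul_def, Real.coe_toNNReal _ (hp_nonneg y)]

lemma integrable_gauss_smul_self : Integrable (fun u : E => gaussDensity n 1 u • u) := by
  apply Integrable.mono' (integrable_pow_mul_gauss n 1)
  · exact ((gauss_cont n).smul continuous_id).aestronglyMeasurable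
  · filter_upwards with u
    rw [norm_smul, Real.norm_eq_abs, abs_of_nonneg (gauss_nonneg n u), pow_one]
    exact le_of_eq (mul_comm _ _)

lemma integral_gauss_smul_zero : ∫ u : E, gaussDensity n 1 u • u = 0 := by
  have h : (∫ u : E, gaussDensity n 1 u • u) = - ∫ u : E, gaussDensity n 1 u • u := by
    conv_lhs => rw [← integral_neg_eq_self (fun u : E => gaussDensity n 1 u • u)
      (volume : Measure E)]
    rw [← integral_neg]
    apply integral_congr_ae
    filter_upwards with u
    rw [gauss_neg, smul_neg]
  have h2 : (∫ u : E, gaussDensity n 1 u • u) + (∫ u : E, gaussDensity n 1 u • u) = 0 := by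
    nth_rewrite 1 [h]
    exact neg_add_cancel _
  have h3 : (2 : ℝ) • (∫ u : E, gaussDensity n 1 u • u) = 0 := by
    rw [two_smul]; exact h2
  rcases smul_eq_zero.mp h3 with h4 | h4
  · norm_num at h4
  · exact h4


end DAE

open DAE in
set_option maxHeartbeats 2000000 in
/-- Alain–Bengio asymptotics of the optimal DAE: if the clean-signal law `λ` has a
bounded continuous density `p` with bounded continuous gradient `G` and finite first
moment, then at every `x` with `p(x) > 0`, the optimal denoising autoencoder
`R*(x; ς) = (∫ y g_ς(x − y) dλ(y)) / p_ς(x)` satisfies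
`(R*(x; ς) − x)/ς² → ∇_x log p(x) = G(x)/p(x)` as `ς → 0⁺`;
i.e. `R*(x; ς) = x + ς² ∇_x log p(x) + o(ς²)`. -/
theorem alain_bengio_dae_asymptotics (n : ℕ)
    (p : EuclideanSpace ℝ (Fin n) → ℝ) (G : EuclideanSpace ℝ (Fin n) → EuclideanSpace ℝ (Fin n))
    (lam : Measure (EuclideanSpace ℝ (Fin n)))
    (hlam : lam = volume.withDensity fun y => ENNReal.ofReal (p y))
    [IsProbabilityMeasure lam]
    (hmom : Integrable (fun y => ‖y‖) lam)
    (hp_nonneg : ∀ z, 0 ≤ p z) (hp_cont : Continuous p) (hp_bdd : ∃ C, ∀ z, p z ≤ C)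
    (hG : ∀ z, HasGradientAt p (G z) z) (hG_cont : Continuous G)
    (hG_bdd : ∃ C, ∀ z, ‖G z‖ ≤ C)
    (x : EuclideanSpace ℝ (Fin n)) (hpx : 0 < p x) :
    Tendsto
      (fun ς : ℝ =>
        (ς ^ 2)⁻¹ •
          ((∫ y, gaussDensity n ς (x - y) ∂lam)⁻¹ •
              (∫ y, gaussDensity n ς (x - y) • y ∂lam) - x))
      (nhdsWithin 0 (Set.Ioi 0))
      (nhds ((p x)⁻¹ • G x)) := by
  obtain ⟨Cp, hCp⟩ := hp_bdd
  obtain ⟨Cg, hCg⟩ := hG_bdd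
  have hCp0 : 0 ≤ Cp := le_trans (hp_nonneg x) (hCp x)
  have hCg0 : 0 ≤ Cg := le_trans (norm_nonneg _) (hCg x)
  have hpabs : ∀ z, |p z| ≤ Cp := fun z => by
    rw [abs_of_nonneg (hp_nonneg z)]; exact hCp z
  -- Lipschitz property of p
  have hlip : ∀ a b : EuclideanSpace ℝ (Fin n), ‖p b - p a‖ ≤ Cg * ‖b - a‖ := by
    intro a b
    apply Convex.norm_image_sub_le_of_norm_hasFDerivWithin_le
      (f' := fun z => InnerProductSpace.toDual ℝ (EuclideanSpace ℝ (Fin n)) (G z))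
      (fun z _ => (hasGradientAt_iff_hasFDerivAt.1 (hG z)).hasFDerivWithinAt)
      (fun z _ => ?_) convex_univ (Set.mem_univ a) (Set.mem_univ b)
    rw [LinearIsometryEquiv.norm_map]
    exact hCg z
  -- notation
  set g1 : EuclideanSpace ℝ (Fin n) → ℝ := gaussDensity n 1 with hg1
  set B : ℝ → ℝ := fun ς => ∫ u : EuclideanSpace ℝ (Fin n), g1 u * p (x + ς • u) with hB
  set P : ℝ → EuclideanSpace ℝ (Fin n) := fun ς => ∫ u : EuclideanSpace ℝ (Fin n), p (x + ς • u) • (g1 u • u) with hP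
  set N : ℝ → EuclideanSpace ℝ (Fin n) := fun ς => ∫ u : EuclideanSpace ℝ (Fin n), (ς⁻¹ * (p (x + ς • u) - p x)) • (g1 u • u) with hN
  -- integrability facts (for every ς)
  have hmeas_add : ∀ ς : ℝ, Continuous (fun u : EuclideanSpace ℝ (Fin n) => x + ς • u) := fun ς =>
    continuous_const.add (continuous_id.const_smul ς)
  have hint_B : ∀ ς : ℝ, Integrable (fun u : EuclideanSpace ℝ (Fin n) => g1 u * p (x + ς • u)) := by
    intro ς
    apply Integrable.mono' ((integrable_pow_mul_gauss n 0).const_mul Cp)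
    · exact ((gauss_cont n).mul (hp_cont.comp (hmeas_add ς))).aestronglyMeasurable
    · filter_upwards with u
      rw [Real.norm_eq_abs, abs_mul, abs_of_nonneg (gauss_nonneg n u), pow_zero, one_mul]
      calc g1 u * |p (x + ς • u)| ≤ g1 u * Cp :=
            mul_le_mul_of_nonneg_left (hpabs _) (gauss_nonneg n u)
        _ = Cp * g1 u := mul_comm _ _
  have hint_P : ∀ ς : ℝ, Integrable (fun u : EuclideanSpace ℝ (Fin n) => p (x + ς • u) • (g1 u • u)) := by
    intro ς
    apply Integrable.mono' ((integrable_pow_mul_gauss n 1).const_mul Cp)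
    · exact ((hp_cont.comp (hmeas_add ς)).smul
        ((gauss_cont n).smul continuous_id)).aestronglyMeasurable
    · filter_upwards with u
      rw [norm_smul, norm_smul, Real.norm_eq_abs, Real.norm_eq_abs,
        abs_of_nonneg (gauss_nonneg n u), pow_one]
      calc |p (x + ς • u)| * (g1 u * ‖u‖) ≤ Cp * (g1 u * ‖u‖) :=
            mul_le_mul_of_nonneg_right (hpabs _)
              (mul_nonneg (gauss_nonneg n u) (norm_nonneg u))
        _ = Cp * (‖u‖ * g1 u) := by ring
  -- (i) denominator convergence
  have hBconv : Tendsto B (nhdsWithin 0 (Set.Ioi 0)) (nhds (p x)) := by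
    have hlim : ∫ u : EuclideanSpace ℝ (Fin n), g1 u * p x = p x := by
      rw [integral_mul_const, integral_gauss_one, one_mul]
    rw [← hlim]
    apply tendsto_integral_filter_of_dominated_convergence (fun u => Cp * g1 u)
    · filter_upwards with ς
      exact ((gauss_cont n).mul (hp_cont.comp (hmeas_add ς))).aestronglyMeasurable
    · filter_upwards with ς
      filter_upwards with u
      rw [Real.norm_eq_abs, abs_mul, abs_of_nonneg (gauss_nonneg n u)]
      calc g1 u * |p (x + ς • u)| ≤ g1 u * Cp :=
            mul_le_mul_of_nonneg_left (hpabs _) (gauss_nonneg n u)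
        _ = Cp * g1 u := mul_comm _ _
    · have := (integrable_pow_mul_gauss n 0).const_mul Cp
      apply this.congr
      filter_upwards with u
      rw [pow_zero, one_mul]
    · filter_upwards with u
      apply Tendsto.const_mul
      have hx0 : Tendsto (fun ς : ℝ => x + ς • u) (nhdsWithin 0 (Set.Ioi 0)) (nhds x) := by
        have hc : Continuous (fun ς : ℝ => x + ς • u) :=
          continuous_const.add (continuous_id.smul continuous_const)
        have h0 := hc.tendsto 0
        rw [show x + (0:ℝ) • u = x by simp] at h0
        exact h0.mono_left nhdsWithin_le_nhds
      exact (hp_cont.tendsto x).comp hx0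
  have hBpos : ∀ᶠ ς in nhdsWithin (0:ℝ) (Set.Ioi 0), 0 < B ς :=
    hBconv.eventually (eventually_gt_nhds hpx)
  -- (ii) numerator convergence
  have hNconv : Tendsto N (nhdsWithin 0 (Set.Ioi 0)) (nhds (G x)) := by
    have hlim : ∫ u : EuclideanSpace ℝ (Fin n), (inner ℝ (G x) u : ℝ) • (g1 u • u) = G x :=
      integral_inner_gauss_smul n (G x)
    rw [← hlim]
    apply tendsto_integral_filter_of_dominated_convergence (fun u => Cg * (‖u‖ ^ 2 * g1 u))
    · filter_upwards with ς
      apply Continuous.aestronglyMeasurable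
      exact (continuous_const.mul ((hp_cont.comp (hmeas_add ς)).sub continuous_const)).smul
        ((gauss_cont n).smul continuous_id)
    · filter_upwards [self_mem_nhdsWithin] with ς hς
      filter_upwards with u
      rw [norm_smul, norm_smul, Real.norm_eq_abs, Real.norm_eq_abs,
        abs_of_nonneg (gauss_nonneg n u)]
      have hς0 : (0:ℝ) < ς := hς
      have key : |ς⁻¹ * (p (x + ς • u) - p x)| ≤ Cg * ‖u‖ := by
        rw [abs_mul, abs_inv, abs_of_pos hς0]
        have h1 : |p (x + ς • u) - p x| ≤ Cg * (ς * ‖u‖) := by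
          have := hlip x (x + ς • u)
          rw [add_sub_cancel_left, norm_smul, Real.norm_eq_abs, Real.norm_eq_abs,
            abs_of_pos hς0] at this
          exact this
        calc ς⁻¹ * |p (x + ς • u) - p x| ≤ ς⁻¹ * (Cg * (ς * ‖u‖)) :=
              mul_le_mul_of_nonneg_left h1 (by positivity)
          _ = Cg * ‖u‖ := by field_simp
      calc |ς⁻¹ * (p (x + ς • u) - p x)| * (g1 u * ‖u‖)
          ≤ (Cg * ‖u‖) * (g1 u * ‖u‖) := by
            apply mul_le_mul_of_nonneg_right key
              (mul_nonneg (gauss_nonneg n u) (norm_nonneg u))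
        _ = Cg * (‖u‖ ^ 2 * g1 u) := by ring
    · exact (integrable_pow_mul_gauss n 2).const_mul Cg
    · filter_upwards with u
      have hline : HasDerivAt (fun t : ℝ => p (x + t • u)) ((inner ℝ (G x) u : ℝ)) 0 := by
        have h := (hasGradientAt_iff_hasFDerivAt.1 (hG x)).hasLineDerivAt u
        rw [InnerProductSpace.toDual_apply_apply] at h
        exact h
      have hslope := hasDerivAt_iff_tendsto_slope.1 hline
      have hslope2 : Tendsto (fun ς : ℝ => ς⁻¹ * (p (x + ς • u) - p x))
          (nhdsWithin 0 (Set.Ioi 0)) (nhds ((inner ℝ (G x) u : ℝ))) := by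
        have hmono : nhdsWithin (0:ℝ) (Set.Ioi 0) ≤ nhdsWithin 0 {(0:ℝ)}ᶜ :=
          nhdsWithin_mono 0 (fun y hy => ne_of_gt hy)
        have := hslope.mono_left hmono
        apply this.congr
        intro ς
        rw [slope_def_field]
        simp [div_eq_inv_mul]
      exact hslope2.smul_const _
  -- (iii) eventual equality of the two expressions
  have heq : ∀ᶠ ς in nhdsWithin (0:ℝ) (Set.Ioi 0),
      (ς ^ 2)⁻¹ • ((∫ y, gaussDensity n ς (x - y) ∂lam)⁻¹ •
        (∫ y, gaussDensity n ς (x - y) • y ∂lam) - x) = (B ς)⁻¹ • N ς := by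
    filter_upwards [hBpos, self_mem_nhdsWithin] with ς hBς hςmem
    have hς : (0:ℝ) < ς := hςmem
    -- denominators
    have hd : (∫ y, gaussDensity n ς (x - y) ∂lam) = B ς := by
      rw [hlam, integral_withDensity_smul n p hp_cont.measurable hp_nonneg]
      have h1 : ∫ y : EuclideanSpace ℝ (Fin n), p y • gaussDensity n ς (x - y)
          = ∫ y : EuclideanSpace ℝ (Fin n), gaussDensity n ς (x - y) • p y := by
        apply integral_congr_ae; filter_upwards with y
        rw [smul_eq_mul, smul_eq_mul, mul_comm]
      rw [h1, gauss_subst n hς x p]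
      apply integral_congr_ae; filter_upwards with u
      rw [smul_eq_mul]
    -- numerators
    have hm : (∫ y, gaussDensity n ς (x - y) • y ∂lam)
        = ∫ u : EuclideanSpace ℝ (Fin n), g1 u • (p (x + ς • u) • (x + ς • u)) := by
      rw [hlam, integral_withDensity_smul n p hp_cont.measurable hp_nonneg]
      have h1 : ∫ y : EuclideanSpace ℝ (Fin n), p y • (gaussDensity n ς (x - y) • y)
          = ∫ y : EuclideanSpace ℝ (Fin n), gaussDensity n ς (x - y) • (p y • y) := by
        apply integral_congr_ae; filter_upwards with y
        rw [smul_comm]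
      rw [h1, gauss_subst n hς x (fun y => p y • y)]
    -- expand the numerator integral
    have hsplit : (∫ u : EuclideanSpace ℝ (Fin n), g1 u • (p (x + ς • u) • (x + ς • u)))
        = B ς • x + ς • P ς := by
      have hpt : ∀ u : EuclideanSpace ℝ (Fin n), g1 u • (p (x + ς • u) • (x + ς • u))
          = (g1 u * p (x + ς • u)) • x + ς • (p (x + ς • u) • (g1 u • u)) := by
        intro u
        module
      calc (∫ u : EuclideanSpace ℝ (Fin n), g1 u • (p (x + ς • u) • (x + ς • u)))
          = ∫ u : EuclideanSpace ℝ (Fin n), ((g1 u * p (x + ς • u)) • x + ς • (p (x + ς • u) • (g1 u • u))) :=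
            integral_congr_ae (by filter_upwards with u; exact hpt u)
        _ = (∫ u : EuclideanSpace ℝ (Fin n), (g1 u * p (x + ς • u)) • x)
            + ∫ u : EuclideanSpace ℝ (Fin n), ς • (p (x + ς • u) • (g1 u • u)) :=
            integral_add ((hint_B ς).smul_const x) ((hint_P ς).smul ς)
        _ = B ς • x + ς • P ς := by rw [integral_smul_const, integral_smul]
    -- N = ς⁻¹ • P
    have hNP : N ς = ς⁻¹ • P ς := by
      have hpt : ∀ u : EuclideanSpace ℝ (Fin n), (ς⁻¹ * (p (x + ς • u) - p x)) • (g1 u • u)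
          = ς⁻¹ • (p (x + ς • u) • (g1 u • u)) - (ς⁻¹ * p x) • (g1 u • u) := by
        intro u
        module
      calc N ς = ∫ u : EuclideanSpace ℝ (Fin n), (ς⁻¹ • (p (x + ς • u) • (g1 u • u))
            - (ς⁻¹ * p x) • (g1 u • u)) :=
            integral_congr_ae (by filter_upwards with u; exact hpt u)
        _ = (∫ u : EuclideanSpace ℝ (Fin n), ς⁻¹ • (p (x + ς • u) • (g1 u • u)))
            - ∫ u : EuclideanSpace ℝ (Fin n), (ς⁻¹ * p x) • (g1 u • u) :=
            integral_sub ((hint_P ς).smul ς⁻¹)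
              ((integrable_gauss_smul_self n).smul (ς⁻¹ * p x))
        _ = ς⁻¹ • P ς - (ς⁻¹ * p x) • (0 : EuclideanSpace ℝ (Fin n)) := by
            rw [integral_smul, integral_smul, integral_gauss_smul_zero]
        _ = ς⁻¹ • P ς := by rw [smul_zero, sub_zero]
    -- final algebra
    rw [hd, hm, hsplit, hNP]
    have hB0 : B ς ≠ 0 := ne_of_gt hBς
    have hς0 : ς ≠ 0 := ne_of_gt hς
    rw [smul_add, smul_smul, inv_mul_cancel₀ hB0, one_smul, add_sub_cancel_left,
      smul_smul, smul_smul, smul_smul]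
    congr 1
    field_simp
  -- conclusion
  have hfinal : Tendsto (fun ς => (B ς)⁻¹ • N ς) (nhdsWithin 0 (Set.Ioi 0))
      (nhds ((p x)⁻¹ • G x)) :=
    (hBconv.inv₀ (ne_of_gt hpx)).smul hNconv
  exact hfinal.congr' (heq.mono fun ς h => h.symm)
end
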